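/- arXiv:1307.7907 — 5 statements merged into one kernel-verified Lean document; each statement's English description precedes it below -/
import Mathlib

section
/- For all integers k ≥ 1 and n ≥ 1, the product k(k+3)(k+6)⋯(k+3n-3) (n factors, arithmetic progression with step 3 starting at k) is bounded by e^k · (4n)^n. -/
/-- For all integers `k ≥ 1` and `n ≥ 1`, the product
`k(k+3)(k+6)⋯(k+3n-3)` (with `n` factors) is bounded by `e^k · (4n)^n`. -/
theorem prod_arith_prog_le (k n : ℕ) (hk : 1 ≤ k) (hn : 1 ≤ n) :
    (∏ j ∈ Finset.range n, ((k : ℝ) + 3 * j)) ≤ Real.exp k * (4 * n) ^ n := by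
  have h1 : (∏ j ∈ Finset.range n, ((k : ℝ) + 3 * j)) ≤ ((k : ℝ) + 3 * n) ^ n := by
    calc (∏ j ∈ Finset.range n, ((k : ℝ) + 3 * j))
        ≤ ∏ _j ∈ Finset.range n, ((k : ℝ) + 3 * n) := by
          apply Finset.prod_le_prod
          · intro i _; positivity
          · intro i hi
            have : (i : ℝ) ≤ n := by exact_mod_cast (Finset.mem_range.mp hi).le
            linarith
      _ = ((k : ℝ) + 3 * n) ^ n := by rw [Finset.prod_const, Finset.card_range]
  refine h1.trans ?_
  have hbin : ((k : ℝ) + 3 * n) ^ n = ∑ j ∈ Finset.range (n + 1),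
      (k : ℝ) ^ j * (3 * n) ^ (n - j) * n.choose j := add_pow _ _ _
  have hbin2 : ((n : ℝ) + 3 * n) ^ n = ∑ j ∈ Finset.range (n + 1),
      (n : ℝ) ^ j * (3 * n) ^ (n - j) * n.choose j := add_pow _ _ _
  have h4 : (4 * (n : ℝ)) ^ n = ((n : ℝ) + 3 * n) ^ n := by ring_nf
  rw [hbin, h4, hbin2, Finset.mul_sum]
  apply Finset.sum_le_sum
  intro j hj
  have hjn : j ≤ n := Nat.lt_succ_iff.mp (Finset.mem_range.mp hj)
  have hkey : (k : ℝ) ^ j ≤ Real.exp k * (n : ℝ) ^ j := by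
    have hexp : (k : ℝ) ^ j / j.factorial ≤ Real.exp k :=
      Real.pow_div_factorial_le_exp (k:ℝ) (by positivity) j
    have hfac : (j.factorial : ℝ) ≤ (n : ℝ) ^ j := by
      have : j.factorial ≤ n ^ j :=
        (Nat.factorial_le_pow j).trans (Nat.pow_le_pow_left hjn j)
      exact_mod_cast this
    have hfpos : (0 : ℝ) < j.factorial := by positivity
    calc (k : ℝ) ^ j = (k : ℝ) ^ j / j.factorial * j.factorial := by field_simp
      _ ≤ Real.exp k * (n : ℝ) ^ j := by
          apply mul_le_mul hexp hfac hfpos.le (Real.exp_pos _).le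
  have h3n : (0 : ℝ) ≤ (3 * (n : ℝ)) ^ (n - j) := by positivity
  have hc : (0 : ℝ) ≤ (n.choose j : ℝ) := by positivity
  calc (k : ℝ) ^ j * (3 * n) ^ (n - j) * n.choose j
      ≤ Real.exp k * (n : ℝ) ^ j * (3 * n) ^ (n - j) * n.choose j := by
        apply mul_le_mul_of_nonneg_right (mul_le_mul_of_nonneg_right hkey h3n) hc
    _ = Real.exp k * ((n : ℝ) ^ j * (3 * n) ^ (n - j) * n.choose j) := by ring
end

section
/- Let ν be a probability measure on the space M of probability densities on ℝ³, and suppose that for every k ≥ 1 the function f_k(v_1,…,v_k) := ∫ f(v_1)⋯f(v_k) dν(f) satisfies ‖f_k‖_∞ ≤ C/α^k for some constants C, α > 0 independent of k. Then for ν-almost every f one has ‖f‖_∞ ≤ 1/α. -/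
open MeasureTheory

lemma aux_ae_le {Ω : Type*} [MeasurableSpace Ω] (μ : Measure Ω) [IsProbabilityMeasure μ]
    (g : Ω → ℝ) (hg : ∀ ω, 0 ≤ g ω) (C α : ℝ) (hC : 0 < C) (hα : 0 < α)
    (hint : ∀ k : ℕ, 1 ≤ k → Integrable (fun ω => (g ω)^k) μ)
    (hm : ∀ k : ℕ, 1 ≤ k → ∫ ω, (g ω)^k ∂μ ≤ C / α^k) :
    ∀ᵐ ω ∂μ, g ω ≤ 1/α := by
  have key : ∀ b : ℝ, 1/α < b → μ {ω | b ≤ g ω} = 0 := by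
    intro b hb
    have hb0 : 0 < b := lt_trans (by positivity) hb
    have hαb : 1 < α * b := by
      rw [div_lt_iff₀ hα] at hb; linarith [mul_comm b α]
    -- μ {b ≤ g}.toReal ≤ C / (α*b)^k
    have hbd : ∀ k : ℕ, 1 ≤ k → (μ {ω | b ≤ g ω}).toReal ≤ C * (1/(α*b))^k := by
      intro k hk
      have hset : {ω | b^k ≤ (g ω)^k} = {ω | b ≤ g ω} := by
        ext ω
        simp only [Set.mem_setOf_eq]
        constructor
        · intro h
          exact le_of_pow_le_pow_left₀ (by omega) (hg ω) h
        · intro h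
          exact pow_le_pow_left₀ hb0.le h k
      have := mul_meas_ge_le_integral_of_nonneg
        (f := fun ω => (g ω)^k) (μ := μ)
        (Filter.Eventually.of_forall (fun ω => pow_nonneg (hg ω) k)) (hint k hk) (b^k)
      rw [hset] at this
      have h2 : b^k * (μ {ω | b ≤ g ω}).toReal ≤ C / α^k := this.trans (hm k hk)
      have hbk : 0 < b^k := pow_pos hb0 k
      calc (μ {ω | b ≤ g ω}).toReal ≤ (C / α^k) / b^k := by
            rw [le_div_iff₀ hbk, mul_comm]; exact h2
        _ = C * (1/(α*b))^k := by
            rw [div_pow, one_pow, mul_pow]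
            field_simp
    have htend : Filter.Tendsto (fun k : ℕ => C * (1/(α*b))^k) Filter.atTop (nhds 0) := by
      have : (0:ℝ) = C * 0 := by ring
      rw [this]
      apply Filter.Tendsto.const_mul
      apply tendsto_pow_atTop_nhds_zero_of_lt_one
      · positivity
      · rw [div_lt_one (by positivity)]; linarith
    have hle : (μ {ω | b ≤ g ω}).toReal ≤ 0 := by
      refine ge_of_tendsto htend ?_
      filter_upwards [Filter.eventually_ge_atTop 1] with k hk using hbd k hk
    have := ENNReal.toReal_nonneg (a := μ {ω | b ≤ g ω})
    have h0 : (μ {ω | b ≤ g ω}).toReal = 0 := le_antisymm hle this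
    have hfin : μ {ω | b ≤ g ω} ≠ ⊤ := by
      exact ne_top_of_le_ne_top (measure_ne_top μ _) (measure_mono (Set.subset_univ _))
    exact (ENNReal.toReal_eq_zero_iff _).1 h0 |>.resolve_right hfin
  have : μ {ω | 1/α < g ω} = 0 := by
    have hsub : {ω | 1/α < g ω} ⊆ ⋃ n : ℕ, {ω | 1/α + 1/(n+1) ≤ g ω} := by
      intro ω hω
      obtain ⟨n, hn⟩ := exists_nat_one_div_lt (show (0:ℝ) < g ω - 1/α from sub_pos.2 hω)
      exact Set.mem_iUnion.2 ⟨n, by simp only [Set.mem_setOf_eq]; push_cast; linarith⟩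
    refine measure_mono_null hsub ?_
    refine measure_iUnion_null fun n => key _ ?_
    have : (0:ℝ) < 1/((n:ℝ)+1) := by positivity
    linarith
  rw [ae_iff]
  convert this using 2
  ext ω; simp [not_le]

/-- Hewitt–Savage bound: if `ν` is a probability measure on a family of continuous
probability densities on `ℝ³` (here parametrized by a probability space `(Ω, μ)` via
`F : Ω → (ℝ³ → ℝ)`), and for every `k ≥ 1` the `k`-particle function
`f_k(v₁,…,v_k) = ∫ F ω (v₁)⋯F ω (v_k) dμ(ω)` satisfies `‖f_k‖_∞ ≤ C/α^k`,
then for `μ`-almost every `ω` one has `‖F ω‖_∞ ≤ 1/α`. -/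
theorem ae_sup_bound_of_moment_bounds
    {Ω : Type*} [MeasurableSpace Ω] (μ : Measure Ω) [IsProbabilityMeasure μ]
    (F : Ω → (Fin 3 → ℝ) → ℝ) (C α : ℝ) (hC : 0 < C) (hα : 0 < α)
    (hcont : ∀ ω, Continuous (F ω))
    (hnonneg : ∀ ω v, 0 ≤ F ω v)
    (hL1 : ∀ ω, Integrable (F ω))
    (hprob : ∀ ω, ∫ v, F ω v = 1)
    (hint : ∀ (k : ℕ) (v : Fin k → (Fin 3 → ℝ)),
      Integrable (fun ω => ∏ i, F ω (v i)) μ)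
    (hmom : ∀ (k : ℕ), 1 ≤ k → ∀ (v : Fin k → (Fin 3 → ℝ)),
      (∫ ω, ∏ i, F ω (v i) ∂μ) ≤ C / α ^ k) :
    ∀ᵐ ω ∂μ, ∀ v, F ω v ≤ 1 / α := by
  -- pointwise a.e. bound for each fixed v
  have hpt : ∀ v : Fin 3 → ℝ, ∀ᵐ ω ∂μ, F ω v ≤ 1 / α := by
    intro v
    have hprod : ∀ k : ℕ, (fun ω => ∏ _i : Fin k, F ω v) = (fun ω => (F ω v)^k) := by
      intro k; funext ω; simp [Finset.prod_const]
    refine aux_ae_le μ (fun ω => F ω v) (fun ω => hnonneg ω v) C α hC hα ?_ ?_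
    · intro k hk
      have := hint k (fun _ => v)
      rwa [hprod k] at this
    · intro k hk
      have := hmom k hk (fun _ => v)
      rwa [hprod k] at this
  -- countable dense set
  obtain ⟨D, hDc, hDd⟩ := TopologicalSpace.exists_countable_dense (Fin 3 → ℝ)
  have hae : ∀ᵐ ω ∂μ, ∀ v ∈ D, F ω v ≤ 1 / α :=
    (ae_ball_iff hDc).2 (fun v _ => hpt v)
  filter_upwards [hae] with ω hω v
  have hclosed : IsClosed {v | F ω v ≤ 1 / α} := isClosed_le (hcont ω) continuous_const
  have : Set.univ ⊆ {v | F ω v ≤ 1 / α} := by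
    rw [← hDd.closure_eq]
    exact closure_minimal (fun x hx => hω x hx) hclosed
  exact this (Set.mem_univ v)
end

section
/- If probability measures f_k as in the Hewitt–Savage representation f_k(V_k) = ∫ f^{⊗k}(V_k) dν(f) satisfy ‖f_k‖_∞ ≤ C/α^k for all k and some constants C, α > 0, then in fact ‖f_k‖_∞ ≤ (1/α)^k for all k. -/
open MeasureTheory

/-- If the marginals from the Hewitt–Savage representation
`f_k(V_k) = ∫ F ω (v₁)⋯F ω (v_k) dμ(ω)` satisfy `‖f_k‖_∞ ≤ C/α^k` for all `k`
and some constants `C, α > 0`, then in fact `‖f_k‖_∞ ≤ (1/α)^k` for all `k`. -/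
theorem moment_bounds_improve
    {Ω : Type*} [MeasurableSpace Ω] (μ : Measure Ω) [IsProbabilityMeasure μ]
    (F : Ω → (Fin 3 → ℝ) → ℝ) (C α : ℝ) (hC : 0 < C) (hα : 0 < α)
    (hcont : ∀ ω, Continuous (F ω))
    (hnonneg : ∀ ω v, 0 ≤ F ω v)
    (hL1 : ∀ ω, Integrable (F ω))
    (hprob : ∀ ω, ∫ v, F ω v = 1)
    (hint : ∀ (k : ℕ) (v : Fin k → (Fin 3 → ℝ)),
      Integrable (fun ω => ∏ i, F ω (v i)) μ)
    (hmom : ∀ (k : ℕ), 1 ≤ k → ∀ (v : Fin k → (Fin 3 → ℝ)),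
      (∫ ω, ∏ i, F ω (v i) ∂μ) ≤ C / α ^ k) :
    ∀ (k : ℕ), 1 ≤ k → ∀ (v : Fin k → (Fin 3 → ℝ)),
      (∫ ω, ∏ i, F ω (v i) ∂μ) ≤ (1 / α) ^ k := by
  have hpt : ∀ v₀ : Fin 3 → ℝ, ∀ᵐ ω ∂μ, F ω v₀ ≤ 1 / α := by
    intro v₀
    have hpow : ∀ m : ℕ, 1 ≤ m → (∫ ω, F ω v₀ ^ m ∂μ) ≤ C / α ^ m := by
      intro m hm
      simpa [Finset.prod_const, Finset.card_univ] using hmom m hm (fun _ => v₀)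
    have hipow : ∀ m : ℕ, Integrable (fun ω => F ω v₀ ^ m) μ := by
      intro m
      simpa [Finset.prod_const, Finset.card_univ] using hint m (fun _ => v₀)
    have key : ∀ t : ℝ, 1 / α < t → μ {ω | t ≤ F ω v₀} = 0 := by
      intro t ht
      have ht0 : 0 < t := lt_of_le_of_lt (by positivity) ht
      have hαt : 1 < α * t := by
        rw [div_lt_iff₀ hα] at ht
        nlinarith
      have hms : ∀ m : ℕ, 1 ≤ m →
          (μ {ω | t ≤ F ω v₀}).toReal ≤ C / (α * t) ^ m := by
        intro m hm
        have h1 : t ^ m * (μ {ω | t ^ m ≤ F ω v₀ ^ m}).toReal ≤ ∫ ω, F ω v₀ ^ m ∂μ :=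
          mul_meas_ge_le_integral_of_nonneg
            (Filter.Eventually.of_forall fun ω => pow_nonneg (hnonneg ω v₀) m)
            (hipow m) _
        have hsub : {ω | t ≤ F ω v₀} ⊆ {ω | t ^ m ≤ F ω v₀ ^ m} := fun ω hω =>
          pow_le_pow_left₀ ht0.le hω m
        have hmono : (μ {ω | t ≤ F ω v₀}).toReal ≤
            (μ {ω | t ^ m ≤ F ω v₀ ^ m}).toReal :=
          ENNReal.toReal_mono (measure_ne_top μ _) (measure_mono hsub)
        have htm : 0 < t ^ m := by positivity
        have h2 : t ^ m * (μ {ω | t ≤ F ω v₀}).toReal ≤ C / α ^ m := by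
          calc t ^ m * (μ {ω | t ≤ F ω v₀}).toReal
              ≤ t ^ m * (μ {ω | t ^ m ≤ F ω v₀ ^ m}).toReal := by
                exact mul_le_mul_of_nonneg_left hmono htm.le
            _ ≤ ∫ ω, F ω v₀ ^ m ∂μ := h1
            _ ≤ C / α ^ m := hpow m hm
        calc (μ {ω | t ≤ F ω v₀}).toReal ≤ C / α ^ m / t ^ m := by
              rw [le_div_iff₀ htm]; linarith [h2]
          _ = C / (α * t) ^ m := by rw [div_div, mul_pow]
      have htend : Filter.Tendsto (fun m : ℕ => C / (α * t) ^ m)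
          Filter.atTop (nhds 0) := by
        have h1 : (α * t)⁻¹ < 1 := by
          rw [inv_lt_one_iff₀]; right; exact hαt
        have h2 : (0:ℝ) ≤ (α * t)⁻¹ := by positivity
        have h3 := (tendsto_pow_atTop_nhds_zero_of_lt_one h2 h1).const_mul C
        rw [mul_zero] at h3
        have heq : (fun m : ℕ => C / (α * t) ^ m)
            = fun m : ℕ => C * ((α * t)⁻¹) ^ m := by
          funext m; rw [div_eq_mul_inv, inv_pow]
        rw [heq]; exact h3
      have hle0 : (μ {ω | t ≤ F ω v₀}).toReal ≤ 0 :=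
        ge_of_tendsto htend (Filter.eventually_atTop.2 ⟨1, fun m hm => hms m hm⟩)
      have h0 : (μ {ω | t ≤ F ω v₀}).toReal = 0 :=
        le_antisymm hle0 ENNReal.toReal_nonneg
      rcases (ENNReal.toReal_eq_zero_iff _).mp h0 with h | h
      · exact h
      · exact absurd h (measure_ne_top μ _)
    have hnull : μ {ω | 1 / α < F ω v₀} = 0 := by
      have hsub : {ω | 1 / α < F ω v₀} ⊆
          ⋃ n : ℕ, {ω | 1 / α + 1 / (n + 1) ≤ F ω v₀} := by
        intro ω hω
        simp only [Set.mem_setOf_eq] at hω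
        obtain ⟨n, hn⟩ := exists_nat_one_div_lt
          (show (0:ℝ) < F ω v₀ - 1 / α by linarith)
        exact Set.mem_iUnion.2 ⟨n, by simp only [Set.mem_setOf_eq]; linarith⟩
      refine measure_mono_null hsub (measure_iUnion_null fun n => key _ ?_)
      have : (0:ℝ) < 1 / ((n:ℝ) + 1) := by positivity
      linarith
    rw [ae_iff]
    simpa [not_le] using hnull
  intro k hk v
  have hae : ∀ᵐ ω ∂μ, ∏ i, F ω (v i) ≤ (1 / α) ^ k := by
    have hall : ∀ᵐ ω ∂μ, ∀ i : Fin k, F ω (v i) ≤ 1 / α :=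
      (ae_all_iff).2 fun i => hpt (v i)
    filter_upwards [hall] with ω hω
    calc ∏ i, F ω (v i) ≤ ∏ _i : Fin k, (1 / α) :=
          Finset.prod_le_prod (fun i _ => hnonneg ω (v i)) (fun i _ => hω i)
      _ = (1 / α) ^ k := by simp [Finset.prod_const]
  have := integral_mono_ae (hint k v) (integrable_const _) hae
  simpa using this
end

section
/- With Z_N = ∫_{ℝ^{3N}} χ̄_δ(V_N) ∏_{i=1}^N f_in(v_i) dV_N, where f_in is a probability density with ‖f_in‖_∞ ≤ G, the grid has cells of volume δ³ with Nδ³ = α and αG < 1, one has Z_N ≥ Z_{N-k}(1-αG)^k ≥ (1-αG)^N for all 0 ≤ k ≤ N. -/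
open MeasureTheory

/-- The cubic cell (of the grid of side `δ`) containing the velocity `v ∈ ℝ³`. -/
noncomputable def cellOf (δ : ℝ) (v : Fin 3 → ℝ) : Fin 3 → ℤ :=
  fun i => ⌊v i / δ⌋

/-- `χ_δ(v,w) = 1` iff `v` and `w` lie in the same cubic cell of side `δ`. -/
noncomputable def chiδ (δ : ℝ) (v w : Fin 3 → ℝ) : ℝ :=
  if cellOf δ v = cellOf δ w then 1 else 0

lemma measurable_cellOf (δ : ℝ) : Measurable (cellOf δ) := by
  apply measurable_pi_lambda
  intro i
  exact Measurable.floor (by fun_prop)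

lemma measurable_chiδ (δ : ℝ) :
    Measurable (fun p : (Fin 3 → ℝ) × (Fin 3 → ℝ) => chiδ δ p.1 p.2) := by
  unfold chiδ
  have : MeasurableSet {p : (Fin 3 → ℝ) × (Fin 3 → ℝ) | cellOf δ p.1 = cellOf δ p.2} :=
    measurableSet_eq_fun ((measurable_cellOf δ).comp measurable_fst)
      ((measurable_cellOf δ).comp measurable_snd)
  exact Measurable.ite this measurable_const measurable_const

lemma chiδ_nonneg (δ : ℝ) (v w : Fin 3 → ℝ) : 0 ≤ chiδ δ v w := by
  unfold chiδ; split <;> norm_num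

lemma chiδ_le_one (δ : ℝ) (v w : Fin 3 → ℝ) : chiδ δ v w ≤ 1 := by
  unfold chiδ; split <;> norm_num

/-- The exclusion indicator `χ̄_δ(V) = ∏_{ℓ<m} (1 - χ_δ(v_ℓ, v_m))`. -/
noncomputable def chiBar (δ : ℝ) {n : ℕ} (V : Fin n → (Fin 3 → ℝ)) : ℝ :=
  ∏ p ∈ Finset.univ.filter (fun p : Fin n × Fin n => p.1 < p.2),
    (1 - chiδ δ (V p.1) (V p.2))

lemma measurable_chiBar (δ : ℝ) (n : ℕ) :
    Measurable (fun V : Fin n → (Fin 3 → ℝ) => chiBar δ V) := by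
  unfold chiBar
  apply Finset.measurable_prod
  intro p _
  have : Measurable (fun V : Fin n → (Fin 3 → ℝ) => chiδ δ (V p.1) (V p.2)) :=
    (measurable_chiδ δ).comp' (by fun_prop : Measurable fun V : Fin n → (Fin 3 → ℝ) => (V p.1, V p.2))
  exact measurable_const.sub this

lemma chiBar_nonneg (δ : ℝ) {n : ℕ} (V : Fin n → (Fin 3 → ℝ)) : 0 ≤ chiBar δ V :=
  Finset.prod_nonneg fun p _ => by linarith [chiδ_le_one δ (V p.1) (V p.2)]

lemma chiBar_le_one (δ : ℝ) {n : ℕ} (V : Fin n → (Fin 3 → ℝ)) : chiBar δ V ≤ 1 :=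
  Finset.prod_le_one (fun p _ => by linarith [chiδ_le_one δ (V p.1) (V p.2)])
    (fun p _ => by linarith [chiδ_nonneg δ (V p.1) (V p.2)])

lemma chiBar_snoc (δ : ℝ) {n : ℕ} (V : Fin n → (Fin 3 → ℝ)) (x : Fin 3 → ℝ) :
    chiBar δ (Fin.snoc V x) = chiBar δ V * ∏ i : Fin n, (1 - chiδ δ (V i) x) := by
  unfold chiBar
  rw [← Finset.prod_filter_mul_prod_filter_not
    (Finset.univ.filter (fun p : Fin (n+1) × Fin (n+1) => p.1 < p.2))
    (fun p => p.2 = Fin.last n)]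
  rw [Finset.filter_filter, Finset.filter_filter, mul_comm]
  congr 1
  · -- pairs with p.2 ≠ last : bijection with pairs in Fin n
    symm
    refine Finset.prod_bij (fun q _ => (Fin.castSucc q.1, Fin.castSucc q.2)) ?_ ?_ ?_ ?_
    · intro q hq
      simp only [Finset.mem_filter, Finset.mem_univ, true_and] at hq ⊢
      exact ⟨Fin.castSucc_lt_castSucc_iff.2 hq, (Fin.castSucc_lt_last q.2).ne⟩
    · intro a _ b _ h
      simp only [Prod.mk.injEq] at h
      exact Prod.ext (Fin.castSucc_injective n h.1) (Fin.castSucc_injective n h.2)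
    · intro b hb
      simp only [Finset.mem_filter, Finset.mem_univ, true_and] at hb
      obtain ⟨h1, h2⟩ := hb
      have hb1 : b.1 ≠ Fin.last n := (h1.trans (lt_of_le_of_ne (Fin.le_last b.2) h2)).ne
      refine ⟨(b.1.castPred hb1, b.2.castPred h2), ?_, ?_⟩
      · simp only [Finset.mem_filter, Finset.mem_univ, true_and]
        rw [← Fin.castSucc_lt_castSucc_iff, Fin.castSucc_castPred, Fin.castSucc_castPred]
        exact h1
      · simp [Fin.castSucc_castPred]
    · intro q hq
      simp [Fin.snoc_castSucc]
  · -- pairs with p.2 = last : bijection with Fin n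
    symm
    refine Finset.prod_bij (fun i _ => (Fin.castSucc i, Fin.last n)) ?_ ?_ ?_ ?_
    · intro i _
      simp [Fin.castSucc_lt_last i]
    · intro a _ b _ h
      simp only [Prod.mk.injEq] at h
      exact Fin.castSucc_injective n h.1
    · intro b hb
      simp only [Finset.mem_filter, Finset.mem_univ, true_and] at hb
      obtain ⟨h1, h2⟩ := hb
      have hb1 : b.1 ≠ Fin.last n := (h2 ▸ h1).ne
      refine ⟨b.1.castPred hb1, Finset.mem_univ _, ?_⟩
      ext
      · simp [Fin.castSucc_castPred]
      · simp [h2.symm]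
    · intro i _
      simp [Fin.snoc_castSucc, Fin.snoc_last]

section Integrals
variable {δ G : ℝ} {f : (Fin 3 → ℝ) → ℝ}

lemma integrable_of_prob (hfmeas : Measurable f) (hfprob : ∫ v, f v = 1) : Integrable f := by
  by_contra h
  rw [integral_undef h] at hfprob
  norm_num at hfprob

lemma volume_cell (hδ : 0 < δ) (c : Fin 3 → ℤ) :
    volume {w : Fin 3 → ℝ | cellOf δ w = c} = ENNReal.ofReal (δ ^ 3) := by
  have hset : {w : Fin 3 → ℝ | cellOf δ w = c} =
      Set.univ.pi (fun i => Set.Ico (δ * c i) (δ * (c i + 1))) := by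
    ext w
    simp only [Set.mem_setOf_eq, Set.mem_pi, Set.mem_univ, true_implies, Set.mem_Ico,
      funext_iff, cellOf]
    refine forall_congr' fun i => ?_
    rw [Int.floor_eq_iff]
    constructor
    · rintro ⟨h1, h2⟩
      constructor
      · calc δ * c i ≤ δ * (w i / δ) := by nlinarith
          _ = w i := by field_simp
      · calc w i = δ * (w i / δ) := by field_simp
          _ < δ * (c i + 1) := by push_cast; nlinarith
    · rintro ⟨h1, h2⟩
      constructor
      · rw [le_div_iff₀ hδ]; linarith
      · rw [div_lt_iff₀ hδ]; push_cast; linarith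
  rw [hset, volume_pi_pi]
  simp only [Real.volume_Ico]
  have : ∀ x : Fin 3, ENNReal.ofReal (δ * (↑(c x) + 1) - δ * ↑(c x)) = ENNReal.ofReal δ := by
    intro x; congr 1; ring
  simp only [this, Finset.prod_const, Finset.card_univ, Fintype.card_fin,
    ← ENNReal.ofReal_pow hδ.le]

lemma weierstrass {ι : Type*} (s : Finset ι) (x : ι → ℝ) (h0 : ∀ i ∈ s, 0 ≤ x i)
    (h1 : ∀ i ∈ s, x i ≤ 1) : 1 - ∑ i ∈ s, x i ≤ ∏ i ∈ s, (1 - x i) := by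
  classical
  induction s using Finset.induction_on with
  | empty => simp
  | insert _ _ hni ih =>
    rename_i a t
    rw [Finset.sum_insert hni, Finset.prod_insert hni]
    have h0' : ∀ i ∈ t, 0 ≤ x i := fun i hi => h0 i (Finset.mem_insert_of_mem hi)
    have h1' : ∀ i ∈ t, x i ≤ 1 := fun i hi => h1 i (Finset.mem_insert_of_mem hi)
    have ih' := ih h0' h1'
    have ha0 := h0 a (Finset.mem_insert_self a t)
    have ha1 := h1 a (Finset.mem_insert_self a t)
    have hsum : 0 ≤ ∑ i ∈ t, x i := Finset.sum_nonneg h0'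
    nlinarith

lemma integrable_chi_mul (hδ : 0 < δ) (hfmeas : Measurable f) (hfint : Integrable f)
    (hfnonneg : ∀ v, 0 ≤ f v) (v : Fin 3 → ℝ) :
    Integrable (fun w => chiδ δ v w * f w) := by
  apply hfint.mono ((((measurable_chiδ δ).comp' (measurable_const.prodMk measurable_id)).mul
    hfmeas)).aestronglyMeasurable
  filter_upwards with w
  simp only [id_eq, Pi.mul_apply, Real.norm_eq_abs, abs_of_nonneg (hfnonneg w),
    abs_of_nonneg (mul_nonneg (chiδ_nonneg δ v w) (hfnonneg w))]
  nlinarith [chiδ_nonneg δ v w, chiδ_le_one δ v w, hfnonneg w]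

lemma integral_chi_mul_le (hδ : 0 < δ) (hG : 0 < G) (hfmeas : Measurable f)
    (hfint : Integrable f) (hfnonneg : ∀ v, 0 ≤ f v) (hfbd : ∀ v, f v ≤ G) (v : Fin 3 → ℝ) :
    ∫ w, chiδ δ v w * f w ≤ δ ^ 3 * G := by
  set S := {w : Fin 3 → ℝ | cellOf δ w = cellOf δ v} with hS
  have hSm : MeasurableSet S :=
    measurableSet_eq_fun (measurable_cellOf δ) measurable_const
  have hle : ∀ w, chiδ δ v w * f w ≤ S.indicator (fun _ => G) w := by
    intro w
    rw [Set.indicator]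
    unfold chiδ
    split
    · rename_i h
      rw [if_pos (show w ∈ S from h.symm)]
      simpa using hfbd w
    · rename_i h
      rw [if_neg (show w ∉ S from fun hw => h (Eq.symm hw))]
      simp
  have hind : Integrable (S.indicator (fun _ => G)) := by
    rw [integrable_indicator_iff hSm]
    apply integrableOn_const ?_ (by simp)
    rw [volume_cell hδ]
    exact ENNReal.ofReal_ne_top
  calc ∫ w, chiδ δ v w * f w ≤ ∫ w, S.indicator (fun _ => G) w :=
        integral_mono (integrable_chi_mul hδ hfmeas hfint hfnonneg v) hind hle
    _ = (volume S).toReal • G := integral_indicator_const G hSm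
    _ = δ ^ 3 * G := by
        rw [volume_cell hδ, ENNReal.toReal_ofReal (by positivity), smul_eq_mul]

lemma measurable_prod_one_sub (hδ : 0 < δ) {n : ℕ} (V : Fin n → (Fin 3 → ℝ)) :
    Measurable (fun w => ∏ i : Fin n, (1 - chiδ δ (V i) w)) := by
  apply Finset.measurable_prod
  intro i _
  exact measurable_const.sub
    ((measurable_chiδ δ).comp' (measurable_const.prodMk measurable_id))

lemma integrable_prod_one_sub_mul (hδ : 0 < δ) (hfmeas : Measurable f) (hfint : Integrable f)
    (hfnonneg : ∀ v, 0 ≤ f v) {n : ℕ} (V : Fin n → (Fin 3 → ℝ)) :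
    Integrable (fun w => (∏ i : Fin n, (1 - chiδ δ (V i) w)) * f w) := by
  have hP : ∀ w, 0 ≤ ∏ i : Fin n, (1 - chiδ δ (V i) w) :=
    fun w => Finset.prod_nonneg fun i _ => by linarith [chiδ_le_one δ (V i) w]
  have hP1 : ∀ w, ∏ i : Fin n, (1 - chiδ δ (V i) w) ≤ 1 :=
    fun w => Finset.prod_le_one (fun i _ => by linarith [chiδ_le_one δ (V i) w])
      (fun i _ => by linarith [chiδ_nonneg δ (V i) w])
  apply hfint.mono ((measurable_prod_one_sub hδ V).mul hfmeas).aestronglyMeasurable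
  filter_upwards with w
  rw [Real.norm_eq_abs, Real.norm_eq_abs, abs_of_nonneg (hfnonneg w), Pi.mul_apply,
    abs_of_nonneg (mul_nonneg (hP w) (hfnonneg w))]
  nlinarith [hP w, hP1 w, hfnonneg w]

lemma inner_integral_bound (hδ : 0 < δ) (hG : 0 < G) (hfmeas : Measurable f)
    (hfint : Integrable f) (hfnonneg : ∀ v, 0 ≤ f v) (hfbd : ∀ v, f v ≤ G)
    (hfprob : ∫ v, f v = 1) {n : ℕ} (V : Fin n → (Fin 3 → ℝ)) :
    1 - (n : ℝ) * (δ ^ 3 * G) ≤ ∫ w, (∏ i : Fin n, (1 - chiδ δ (V i) w)) * f w := by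
  have hint_chi : ∀ i : Fin n, Integrable (fun w => chiδ δ (V i) w * f w) :=
    fun i => integrable_chi_mul hδ hfmeas hfint hfnonneg (V i)
  have hint_h : Integrable (fun w => (1 - ∑ i : Fin n, chiδ δ (V i) w) * f w) := by
    have : (fun w => (1 - ∑ i : Fin n, chiδ δ (V i) w) * f w) =
        (fun w => f w - ∑ i : Fin n, chiδ δ (V i) w * f w) := by
      funext w; rw [sub_mul, one_mul, Finset.sum_mul]
    rw [this]
    exact hfint.sub (integrable_finset_sum _ (fun i _ => hint_chi i))
  have step1 : 1 - (n : ℝ) * (δ ^ 3 * G) ≤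
      ∫ w, (1 - ∑ i : Fin n, chiδ δ (V i) w) * f w := by
    have : (fun w => (1 - ∑ i : Fin n, chiδ δ (V i) w) * f w) =
        (fun w => f w - ∑ i : Fin n, chiδ δ (V i) w * f w) := by
      funext w; rw [sub_mul, one_mul, Finset.sum_mul]
    rw [this, integral_sub hfint (integrable_finset_sum _ (fun i _ => hint_chi i)),
      integral_finset_sum _ (fun i _ => hint_chi i), hfprob]
    have hsum : ∑ i : Fin n, ∫ w, chiδ δ (V i) w * f w ≤ (n : ℝ) * (δ ^ 3 * G) := by
      calc ∑ i : Fin n, ∫ w, chiδ δ (V i) w * f w ≤ ∑ _i : Fin n, δ ^ 3 * G :=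
            Finset.sum_le_sum fun i _ =>
              integral_chi_mul_le hδ hG hfmeas hfint hfnonneg hfbd (V i)
        _ = (n : ℝ) * (δ ^ 3 * G) := by simp [mul_comm]
    linarith
  refine step1.trans (integral_mono hint_h
    (integrable_prod_one_sub_mul hδ hfmeas hfint hfnonneg V) fun w => ?_)
  apply mul_le_mul_of_nonneg_right _ (hfnonneg w)
  exact weierstrass Finset.univ _ (fun i _ => chiδ_nonneg δ (V i) w)
    (fun i _ => chiδ_le_one δ (V i) w)

end Integrals

/-- The partition function `Z_n = ∫ χ̄_δ(V_n) ∏ f_in(v_i) dV_n`. -/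
noncomputable def partZ (δ : ℝ) (f : (Fin 3 → ℝ) → ℝ) (n : ℕ) : ℝ :=
  ∫ V : Fin n → (Fin 3 → ℝ), chiBar δ V * ∏ i, f (V i)

section PartZ
variable {δ G : ℝ} {f : (Fin 3 → ℝ) → ℝ}

lemma integrable_partZ_integrand (hfmeas : Measurable f) (hfint : Integrable f)
    (hfnonneg : ∀ v, 0 ≤ f v) (n : ℕ) :
    Integrable (fun V : Fin n → (Fin 3 → ℝ) => chiBar δ V * ∏ i, f (V i)) := by
  have hprod : Integrable (fun V : Fin n → (Fin 3 → ℝ) => ∏ i, f (V i)) :=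
    Integrable.fintype_prod (fun _ => hfint)
  have hmeas : Measurable (fun V : Fin n → (Fin 3 → ℝ) => chiBar δ V * ∏ i, f (V i)) :=
    (measurable_chiBar δ n).mul (Finset.measurable_prod _ fun i _ =>
      hfmeas.comp' (measurable_pi_apply i))
  apply hprod.mono hmeas.aestronglyMeasurable
  filter_upwards with V
  have h1 : 0 ≤ ∏ i, f (V i) := Finset.prod_nonneg fun i _ => hfnonneg (V i)
  rw [Real.norm_eq_abs, Real.norm_eq_abs, abs_of_nonneg h1,
    abs_of_nonneg (mul_nonneg (chiBar_nonneg δ V) h1)]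
  nlinarith [chiBar_nonneg δ V, chiBar_le_one δ V]

lemma partZ_zero : partZ δ f 0 = 1 := by
  unfold partZ chiBar
  simp only [Finset.univ_eq_empty, Finset.filter_empty, Finset.prod_empty, one_mul]
  simp [volume_pi, integral_const, measureReal_def]

lemma partZ_nonneg (hfnonneg : ∀ v, 0 ≤ f v) (n : ℕ) : 0 ≤ partZ δ f n := by
  apply integral_nonneg
  intro V
  exact mul_nonneg (chiBar_nonneg δ V) (Finset.prod_nonneg fun i _ => hfnonneg (V i))

set_option maxHeartbeats 2000000 in
lemma partZ_step (hδ : 0 < δ) (hG : 0 < G) (hfmeas : Measurable f) (hfint : Integrable f)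
    (hfnonneg : ∀ v, 0 ≤ f v) (hfbd : ∀ v, f v ≤ G) (hfprob : ∫ v, f v = 1)
    {c : ℝ} (n : ℕ) (hc : 0 ≤ c) (hcn : c ≤ 1 - (n : ℝ) * (δ ^ 3 * G)) :
    partZ δ f n * c ≤ partZ δ f (n + 1) := by
  set F : (Fin (n + 1) → (Fin 3 → ℝ)) → ℝ := fun V => chiBar δ V * ∏ i, f (V i) with hF
  have hFint : Integrable F := by
    rw [hF]; exact integrable_partZ_integrand hfmeas hfint hfnonneg (n + 1)
  have MP := (measurePreserving_piFinSuccAbove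
    (fun _ : Fin (n + 1) => (volume : Measure (Fin 3 → ℝ))) (Fin.last n)).symm
  have key : partZ δ f (n + 1) =
      ∫ p : (Fin 3 → ℝ) × (Fin n → (Fin 3 → ℝ)), F (Fin.snoc p.2 p.1)
        ∂((volume : Measure (Fin 3 → ℝ)).prod (Measure.pi fun _ : Fin n => (volume : Measure (Fin 3 → ℝ)))) := by
    rw [partZ, show (∫ V : Fin (n + 1) → (Fin 3 → ℝ), chiBar δ V * ∏ i, f (V i)) = ∫ V, F V from rfl,
      volume_pi, ← MP.integral_comp' F]
    congr 1
    funext p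
    congr 1
    simp [MeasurableEquiv.piFinSuccAbove_symm_apply, Fin.insertNthEquiv]
  have hFcomp : Integrable (fun p : (Fin 3 → ℝ) × (Fin n → (Fin 3 → ℝ)) => F (Fin.snoc p.2 p.1))
      ((volume : Measure (Fin 3 → ℝ)).prod (Measure.pi fun _ : Fin n => (volume : Measure (Fin 3 → ℝ)))) := by
    have hFint' : Integrable F (Measure.pi fun _ : Fin (n + 1) => (volume : Measure (Fin 3 → ℝ))) := by
      rw [← volume_pi]; exact hFint
    have := (MP.integrable_comp_emb (MeasurableEquiv.measurableEmbedding _)).2 hFint' 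
    convert this using 1
    funext p
    congr 1
    simp [MeasurableEquiv.piFinSuccAbove_symm_apply, Fin.insertNthEquiv]
  rw [key, integral_prod_symm _ hFcomp]
  have inner_eq : ∀ V : Fin n → (Fin 3 → ℝ), (∫ x : (Fin 3 → ℝ), F (Fin.snoc V x)) =
      (chiBar δ V * ∏ i, f (V i)) * ∫ x : (Fin 3 → ℝ), (∏ i : Fin n, (1 - chiδ δ (V i) x)) * f x := by
    intro V
    rw [← integral_const_mul]
    congr 1
    funext x
    rw [hF]
    simp only
    rw [chiBar_snoc, Fin.prod_univ_castSucc]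
    simp only [Fin.snoc_castSucc, Fin.snoc_last]
    ring
  have base_nonneg : ∀ V : Fin n → (Fin 3 → ℝ), 0 ≤ chiBar δ V * ∏ i, f (V i) := fun V =>
    mul_nonneg (chiBar_nonneg δ V) (Finset.prod_nonneg fun i _ => hfnonneg (V i))
  have pointwise : ∀ V : Fin n → (Fin 3 → ℝ),
      (chiBar δ V * ∏ i, f (V i)) * c ≤ ∫ x : (Fin 3 → ℝ), F (Fin.snoc V x) := by
    intro V
    rw [inner_eq V]
    apply mul_le_mul_of_nonneg_left _ (base_nonneg V)
    exact hcn.trans (inner_integral_bound hδ hG hfmeas hfint hfnonneg hfbd hfprob V)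
  have hmarg : Integrable (fun V : Fin n → (Fin 3 → ℝ) => ∫ x : (Fin 3 → ℝ), F (Fin.snoc V x))
      (Measure.pi fun _ : Fin n => (volume : Measure (Fin 3 → ℝ))) := by
    have := hFcomp.integral_prod_right
    exact this
  have hrhs : Integrable (fun V : Fin n → (Fin 3 → ℝ) => (chiBar δ V * ∏ i, f (V i)) * c)
      (Measure.pi fun _ : Fin n => (volume : Measure (Fin 3 → ℝ))) := by
    have := (integrable_partZ_integrand (δ := δ) hfmeas hfint hfnonneg n).mul_const c
    rwa [volume_pi] at this
  calc partZ δ f n * c = ∫ V : Fin n → (Fin 3 → ℝ), (chiBar δ V * ∏ i, f (V i)) * c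
        ∂(Measure.pi fun _ : Fin n => (volume : Measure (Fin 3 → ℝ))) := by
        rw [partZ, volume_pi, integral_mul_const]
    _ ≤ ∫ V : Fin n → (Fin 3 → ℝ), (∫ x : (Fin 3 → ℝ), F (Fin.snoc V x))
        ∂(Measure.pi fun _ : Fin n => (volume : Measure (Fin 3 → ℝ))) :=
        integral_mono hrhs hmarg fun V => pointwise V

end PartZ

/-- Lower bound on the partition function of the correlated fermionic initial data:
`Z_N ≥ Z_{N-k}(1-αG)^k ≥ (1-αG)^N` for all `0 ≤ k ≤ N`. -/
theorem partition_function_lower_bound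
    (N k : ℕ) (hkN : k ≤ N) (δ α G : ℝ) (hδ : 0 < δ) (hα : 0 < α) (hG : 0 < G)
    (hαδ : (N : ℝ) * δ ^ 3 = α) (hαG : α * G < 1)
    (f : (Fin 3 → ℝ) → ℝ)
    (hfmeas : Measurable f) (hfnonneg : ∀ v, 0 ≤ f v) (hfbd : ∀ v, f v ≤ G)
    (hfprob : ∫ v, f v = 1) :
    (1 - α * G) ^ N ≤ partZ δ f (N - k) * (1 - α * G) ^ k ∧
      partZ δ f (N - k) * (1 - α * G) ^ k ≤ partZ δ f N := by
  have hc0 : (0 : ℝ) ≤ 1 - α * G := by linarith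
  have hfint : Integrable f := integrable_of_prob hfmeas hfprob
  have chain : ∀ m j : ℕ, m + j ≤ N →
      partZ δ f m * (1 - α * G) ^ j ≤ partZ δ f (m + j) := by
    intro m j
    induction j with
    | zero => intro _; simp
    | succ j ih =>
      intro h
      have h' : m + j ≤ N := by omega
      have hcn : 1 - α * G ≤ 1 - ((m + j : ℕ) : ℝ) * (δ ^ 3 * G) := by
        have hmn : ((m + j : ℕ) : ℝ) ≤ (N : ℝ) := Nat.cast_le.2 (by omega)
        have hd3 : (0 : ℝ) ≤ δ ^ 3 * G := by positivity
        nlinarith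
      have step := partZ_step hδ hG hfmeas hfint hfnonneg hfbd hfprob (m + j) hc0 hcn
      calc partZ δ f m * (1 - α * G) ^ (j + 1)
          = (partZ δ f m * (1 - α * G) ^ j) * (1 - α * G) := by ring
        _ ≤ partZ δ f (m + j) * (1 - α * G) := mul_le_mul_of_nonneg_right (ih h') hc0
        _ ≤ partZ δ f (m + j + 1) := step
  constructor
  · have h1 := chain 0 (N - k) (by omega)
    rw [partZ_zero, one_mul, Nat.zero_add] at h1
    have : (1 - α * G) ^ N = (1 - α * G) ^ (N - k) * (1 - α * G) ^ k := by
      rw [← pow_add, Nat.sub_add_cancel hkN]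
    rw [this]
    exact mul_le_mul_of_nonneg_right h1 (pow_nonneg hc0 k)
  · have h2 := chain (N - k) k (by omega)
    rwa [Nat.sub_add_cancel hkN] at h2
end

section
/- Suppose the initial k-particle marginals satisfy ‖f_k(0)‖ ≤ z^k for all k ≥ 1 (in a fixed norm), each n-th term of the hierarchy expansion is bounded by (t^n/n!) e^{C(k+3n)t} C_0^n · k(k+3)⋯(k+3n-3) · z^{k+3n}, and there are at most 15^n terms at order n. Then the full expansion is bounded by e^k z^k e^{Ckt} ∑_{n≥0} (60 e C_0 z³ t e^{3Ct})^n, which converges whenever t e^{3Ct} < 1/(60 e C_0 z³). -/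
open Finset Real

lemma hier_prod_bound (k n : ℕ) (hk : 1 ≤ k) :
    ∏ j ∈ Finset.range n, ((k : ℝ) + 3 * j) ≤ Real.exp k * (4 * n) ^ n := by
  rcases Nat.eq_zero_or_pos n with hn | hn
  · subst hn
    simp [Real.one_le_exp (by positivity : (0:ℝ) ≤ (k:ℝ))]
  · have hnpos : (0:ℝ) < n := by exact_mod_cast hn
    have key : ∀ j ∈ Finset.range n, ((k : ℝ) + 3 * j) ≤ 4 * n * Real.exp (k / n) := by
      intro j hj
      have hj' : (j : ℝ) ≤ (n : ℝ) - 1 := by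
        have := Finset.mem_range.mp hj
        have : (j : ℝ) + 1 ≤ n := by exact_mod_cast this
        linarith
      have h1 : (1 : ℝ) + k / n ≤ Real.exp (k / n) := by
        have := Real.add_one_le_exp ((k : ℝ) / n)
        linarith
      have hk1 : (1:ℝ) ≤ k := by exact_mod_cast hk
      have h2 : ((k : ℝ) + 3 * j) ≤ 4 * n * (1 + k / n) := by
        have : 4 * (n:ℝ) * (1 + k / n) = 4 * n + 4 * k := by
          field_simp
        rw [this]
        nlinarith
      calc ((k : ℝ) + 3 * j) ≤ 4 * n * (1 + k / n) := h2
        _ ≤ 4 * n * Real.exp (k / n) := by nlinarith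
    calc ∏ j ∈ Finset.range n, ((k : ℝ) + 3 * j)
        ≤ ∏ _j ∈ Finset.range n, (4 * (n:ℝ) * Real.exp (k / n)) := by
          apply Finset.prod_le_prod
          · intro j _; positivity
          · exact key
      _ = (4 * (n:ℝ)) ^ n * Real.exp (k / n) ^ n := by
          rw [Finset.prod_const, Finset.card_range, mul_pow]
      _ = (4 * (n:ℝ)) ^ n * Real.exp (k / n * n) := by
          rw [← Real.exp_nat_mul]; ring_nf
      _ = Real.exp k * (4 * n) ^ n := by
          rw [div_mul_cancel₀ _ (ne_of_gt hnpos)]; ring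

/-- Short-time convergence of the hierarchy expansion: if the order-`n` contribution `S n`
is bounded by `15^n · (t^n/n!) · e^{C(k+3n)t} · C₀^n · k(k+3)⋯(k+3n-3) · z^{k+3n}`,
then the whole expansion is dominated by
`e^k z^k e^{Ckt} ∑_n (60 e C₀ z³ t e^{3Ct})^n`, which converges whenever
`t e^{3Ct} < 1/(60 e C₀ z³)`. -/
theorem hierarchy_expansion_bound
    (k : ℕ) (hk : 1 ≤ k) (C C0 z t : ℝ)
    (hC : 0 < C) (hC0 : 0 < C0) (hz : 0 < z) (ht : 0 < t)
    (S : ℕ → ℝ)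
    (hS : ∀ n : ℕ, |S n| ≤ 15 ^ n * (t ^ n / Nat.factorial n) *
        Real.exp (C * (k + 3 * n) * t) * C0 ^ n *
        (∏ j ∈ Finset.range n, ((k : ℝ) + 3 * j)) * z ^ (k + 3 * n))
    (hconv : t * Real.exp (3 * C * t) < 1 / (60 * Real.exp 1 * C0 * z ^ 3)) :
    Summable S ∧
      ∑' n : ℕ, |S n| ≤ Real.exp k * z ^ k * Real.exp (C * k * t) *
        ∑' n : ℕ, (60 * Real.exp 1 * C0 * z ^ 3 * t * Real.exp (3 * C * t)) ^ n := by
  set r : ℝ := 60 * Real.exp 1 * C0 * z ^ 3 * t * Real.exp (3 * C * t) with hr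
  set A : ℝ := Real.exp k * z ^ k * Real.exp (C * k * t) with hA
  have hrpos : 0 < r := by positivity
  have hr1 : r < 1 := by
    have hpos : 0 < 60 * Real.exp 1 * C0 * z ^ 3 := by positivity
    calc r = 60 * Real.exp 1 * C0 * z ^ 3 * (t * Real.exp (3 * C * t)) := by ring
      _ < 60 * Real.exp 1 * C0 * z ^ 3 * (1 / (60 * Real.exp 1 * C0 * z ^ 3)) := by
          exact mul_lt_mul_of_pos_left hconv hpos
      _ = 1 := by field_simp
  -- key pointwise bound
  have key : ∀ n : ℕ, |S n| ≤ A * r ^ n := by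
    intro n
    refine (hS n).trans ?_
    have hprod := hier_prod_bound k n hk
    have hfact : ((n : ℝ)) ^ n / (Nat.factorial n : ℝ) ≤ Real.exp n :=
      Real.pow_div_factorial_le_exp (n:ℝ) (Nat.cast_nonneg n) n
    have hfactpos : (0:ℝ) < (Nat.factorial n : ℝ) := by
      exact_mod_cast Nat.factorial_pos n
    have hexp : Real.exp (C * (k + 3 * n) * t)
        = Real.exp (C * k * t) * Real.exp (3 * C * t) ^ n := by
      rw [← Real.exp_nat_mul, ← Real.exp_add]; ring_nf
    have hzpow : z ^ (k + 3 * n) = z ^ k * (z ^ 3) ^ n := by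
      rw [pow_add, ← pow_mul]
    -- bound (t^n/n!) * prod ≤ exp k * (4 e t)^n
    have hmid : t ^ n / (Nat.factorial n : ℝ) * (∏ j ∈ Finset.range n, ((k : ℝ) + 3 * j))
        ≤ Real.exp k * (4 * Real.exp 1 * t) ^ n := by
      calc t ^ n / (Nat.factorial n : ℝ) * (∏ j ∈ Finset.range n, ((k : ℝ) + 3 * j))
          ≤ t ^ n / (Nat.factorial n : ℝ) * (Real.exp k * (4 * n) ^ n) := by
            apply mul_le_mul_of_nonneg_left hprod (by positivity)
        _ = Real.exp k * (4 * t) ^ n * ((n:ℝ) ^ n / (Nat.factorial n : ℝ)) := by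
            rw [mul_pow, mul_pow]; field_simp
        _ ≤ Real.exp k * (4 * t) ^ n * Real.exp n := by
            apply mul_le_mul_of_nonneg_left hfact (by positivity)
        _ = Real.exp k * (4 * Real.exp 1 * t) ^ n := by
            have hexpn : Real.exp (n:ℝ) = Real.exp 1 ^ n := by
              rw [← Real.exp_nat_mul]; norm_num
            rw [hexpn, mul_pow, mul_pow]; ring
    calc 15 ^ n * (t ^ n / Nat.factorial n) * Real.exp (C * (k + 3 * n) * t) * C0 ^ n *
          (∏ j ∈ Finset.range n, ((k : ℝ) + 3 * j)) * z ^ (k + 3 * n)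
        = (t ^ n / (Nat.factorial n : ℝ) * (∏ j ∈ Finset.range n, ((k : ℝ) + 3 * j))) *
            (15 ^ n * Real.exp (C * (k + 3 * n) * t) * C0 ^ n * z ^ (k + 3 * n)) := by
          ring
      _ ≤ (Real.exp k * (4 * Real.exp 1 * t) ^ n) *
            (15 ^ n * Real.exp (C * (k + 3 * n) * t) * C0 ^ n * z ^ (k + 3 * n)) := by
          apply mul_le_mul_of_nonneg_right hmid (by positivity)
      _ = A * r ^ n := by
          rw [hexp, hzpow, hA, hr]
          rw [show (60 * Real.exp 1 * C0 * z ^ 3 * t * Real.exp (3 * C * t)) ^ n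
              = 60 ^ n * Real.exp 1 ^ n * C0 ^ n * (z ^ 3) ^ n * t ^ n
                * Real.exp (3 * C * t) ^ n by simp [mul_pow]]
          rw [show (60:ℝ) ^ n = 15 ^ n * 4 ^ n by rw [← mul_pow]; norm_num]
          ring
  have hgeom : Summable (fun n : ℕ => A * r ^ n) :=
    (summable_geometric_of_lt_one hrpos.le hr1).mul_left A
  have hsumabs : Summable (fun n => |S n|) :=
    Summable.of_nonneg_of_le (fun n => abs_nonneg _) key hgeom
  refine ⟨hsumabs.of_abs, ?_⟩
  calc ∑' n : ℕ, |S n| ≤ ∑' n : ℕ, A * r ^ n := Summable.tsum_le_tsum key hsumabs hgeom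
    _ = A * ∑' n : ℕ, r ^ n := tsum_mul_left
end
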